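/- Let G be a group, p a prime number, and K a finite normal subgroup of G. Let Q be a Sylow p-subgroup of K which is normal in K (hence the unique Sylow p-subgroup of K), and assume the quotient group K/Q is cyclic. Let H be a subgroup of G such that K ∩ H is trivial and K·H = G (equivalently, the composite map H → G → G/K is an isomorphism). Then there exists a normal subgroup N of G such that N ∩ Q is trivial and the index [G : N] is at most (|Q| · (|Q|)!)!. -/

import Mathlib

/-!
Since `Q` is characteristic in `K`, it is normal in `G`, and so is `C = C_K(Q)`. The image of `C`
in the cyclic group `K/Q` has kernel `C ∩ Q`, which is central in `C`; hence `C` is abelian and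
its `m`-torsion `T`, for `m = [K : Q]`, is a normal subgroup of `G`. It meets the `p`-group `Q`
trivially because `p ∤ m`. The `m`-th power map sends `C` into `Q` with kernel `T`, so
`[C : T] ≤ |Q|`, while `[K : C] ≤ |Aut Q| ≤ |Q|!`. Finally `TH` is a subgroup of index `[K : T]`
meeting `K` in `T`, and its normal core has index at most `[K : T]!`.
-/

open Subgroup
open scoped Nat

namespace Subgroup

variable {G : Type*} [Group G]

theorem sup_inf_eq_of_le_of_normal {T K : Subgroup G} [T.Normal] (H : Subgroup G) (hTK : T ≤ K) :
    (T ⊔ H) ⊓ K = T ⊔ H ⊓ K :=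
  SetLike.coe_injective <| by rw [coe_inf, normal_mul, normal_mul, mul_inf_assoc _ _ _ hTK]

theorem relIndex_eq_index_of_sup_eq_top {K L : Subgroup G} [K.Normal] (h : K ⊔ L = ⊤) :
    L.relIndex K = L.index := by
  have hstab : MulAction.stabilizer K ((1 : G) : G ⧸ L) = L.subgroupOf K := by
    ext k
    change ((k * 1 : G) : G ⧸ L) = ((1 : G) : G ⧸ L) ↔ _
    simp [QuotientGroup.eq, mem_subgroupOf]
  have : MulAction.IsPretransitive K (G ⧸ L) := by
    refine (MulAction.isPretransitive_iff_base ((1 : G) : G ⧸ L)).2 ?_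
    rintro ⟨g⟩
    have hg : g ∈ ((K ⊔ L : Subgroup G) : Set G) := h ▸ mem_top g
    rw [normal_mul] at hg
    obtain ⟨k, hk, l, hl, rfl⟩ := hg
    refine ⟨⟨k, hk⟩, ?_⟩
    change ((k * 1 : G) : G ⧸ L) = ((k * l : G) : G ⧸ L)
    simpa [QuotientGroup.eq] using hl
  rw [relIndex, ← hstab, MulAction.index_stabilizer_of_transitive, index]

theorem index_normalCore_dvd_factorial (H : Subgroup G) [H.FiniteIndex] :
    H.normalCore.index ∣ H.index ! := by
  rw [normalCore_eq_ker, index_ker, index_eq_card, ← Nat.card_perm]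
  exact card_subgroup_dvd_card _

theorem exists_normal_inf_le_index_le_factorial {K H T : Subgroup G} [K.Normal] [T.Normal]
    (hKH : K ⊓ H = ⊥) (hKHtop : K ⊔ H = ⊤) (hTK : T ≤ K) (hT : T.relIndex K ≠ 0) :
    ∃ N : Subgroup G, N.Normal ∧ N ⊓ K ≤ T ∧ N.index ≤ (T.relIndex K)! := by
  set L := T ⊔ H
  have hLK : L ⊓ K = T := by rw [sup_inf_eq_of_le_of_normal H hTK, inf_comm, hKH, sup_bot_eq]
  have hL : L.index = T.relIndex K := by
    have hKL : K ⊔ L = ⊤ := top_le_iff.1 (hKHtop ▸ sup_le_sup_left le_sup_right K)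
    rw [← relIndex_eq_index_of_sup_eq_top hKL, ← inf_relIndex_right, hLK]
  have : L.FiniteIndex := ⟨hL ▸ hT⟩
  refine ⟨L.normalCore, normalCore_normal L,
    (inf_le_inf_right K (normalCore_le L)).trans hLK.le, ?_⟩
  exact hL ▸ Nat.le_of_dvd (Nat.factorial_pos _) (index_normalCore_dvd_factorial L)

theorem ker_conjNormal (N : Subgroup G) [N.Normal] :
    (MulAut.conjNormal : G →* MulAut N).ker = centralizer N := by
  ext g
  simp only [MonoidHom.mem_ker, MulEquiv.ext_iff, MulAut.one_apply, Subtype.ext_iff,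
    MulAut.conjNormal_apply, mem_centralizer_iff, Subtype.forall, mul_inv_eq_iff_eq_mul]
  exact forall₂_congr fun _ _ => eq_comm

theorem relIndex_centralizer_le_factorial (N K : Subgroup G) [N.Normal] [Finite N] :
    (centralizer N).relIndex K ≤ (Nat.card N)! := by
  rw [← ker_conjNormal, relIndex_ker, ← Nat.card_perm]
  exact (card_le_card_group _).trans <|
    Nat.card_le_card_of_injective _ MulEquiv.toEquiv_injective

theorem normal_of_characteristic_subgroupOf {K Q : Subgroup G} [K.Normal] (hQK : Q ≤ K)
    [(Q.subgroupOf K).Characteristic] : Q.Normal := by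
  simpa [subgroupOf_map_subtype, inf_of_le_left hQK] using
    ConjAct.normal_of_characteristic_of_normal (H := K) (K := Q.subgroupOf K)

theorem isMulCommutative_centralizer_inf {K Q : Subgroup G} [(Q.subgroupOf K).Normal]
    [IsCyclic (K ⧸ Q.subgroupOf K)] : IsMulCommutative ↥(centralizer Q ⊓ K) := by
  let f := (QuotientGroup.mk' (Q.subgroupOf K)).comp
    (inclusion (inf_le_right : centralizer Q ⊓ K ≤ K))
  refine f.isMulCommutative_of_isCyclic_of_ker_le_center fun c hc => mem_center_iff.2 fun d => ?_
  have hcQ : (c : G) ∈ Q := by simpa [f, mem_subgroupOf] using hc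
  exact Subtype.ext (d.2.1 c hcQ).symm

variable (A : Subgroup G) [IsMulCommutative A] (n : ℕ)

def powTorsion : Subgroup G where
  carrier := {x | x ∈ A ∧ x ^ n = 1}
  one_mem' := ⟨A.one_mem, one_pow n⟩
  mul_mem' := by
    rintro x y ⟨hxA, hx⟩ ⟨hyA, hy⟩
    refine ⟨A.mul_mem hxA hyA, ?_⟩
    have hxy : Commute x y := congrArg Subtype.val (mul_comm' (⟨x, hxA⟩ : A) ⟨y, hyA⟩)
    rw [hxy.mul_pow, hx, hy, one_mul]
  inv_mem' := by
    rintro x ⟨hxA, hx⟩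
    exact ⟨A.inv_mem hxA, by rw [inv_pow, hx, inv_one]⟩

variable {A n}

theorem mem_powTorsion {x : G} : x ∈ A.powTorsion n ↔ x ∈ A ∧ x ^ n = 1 := Iff.rfl

theorem powTorsion_le : A.powTorsion n ≤ A := fun _ hx => hx.1

instance powTorsion_normal [A.Normal] : (A.powTorsion n).Normal where
  conj_mem x hx g :=
    ⟨‹A.Normal›.conj_mem x hx.1 g, by rw [conj_pow, hx.2, mul_one, mul_inv_cancel]⟩

theorem powTorsion_inf_eq_bot {p : ℕ} {Q : Subgroup G} (hQ : IsPGroup p Q) (hn : p.Coprime n) :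
    A.powTorsion n ⊓ Q = ⊥ := by
  refine eq_bot_iff.2 fun x ⟨hxT, hxQ⟩ => ?_
  have h := (hQ.orderOf_coprime hn ⟨x, hxQ⟩).eq_one_of_dvd
    (orderOf_dvd_of_pow_eq_one (Subtype.ext hxT.2 : (⟨x, hxQ⟩ : Q) ^ n = 1))
  simpa using h

theorem relIndex_powTorsion_le {B : Subgroup G} [Finite B] (hAB : ∀ x ∈ A, x ^ n ∈ B) :
    (A.powTorsion n).relIndex A ≤ Nat.card B := by
  open scoped IsMulCommutative in
  let f : A →* G := A.subtype.comp (powMonoidHom n)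
  have hker : f.ker = (A.powTorsion n).subgroupOf A := by
    ext x
    simp [f, mem_subgroupOf, mem_powTorsion]
  rw [relIndex, ← hker, index_ker]
  exact card_le_of_le (by rintro _ ⟨x, rfl⟩; exact hAB x x.2)

end Subgroup

/-- **Lemma 4.1 of the paper.**  Let `G` be a group, `p` a prime, `K` a finite normal
subgroup of `G`, `Q ≤ K` a Sylow `p`-subgroup of `K` which is normal in `K`
(hence the unique one), with `K/Q` cyclic.  Let `H ≤ G` with `K ∩ H = ⊥` and
`K ⊔ H = G`.  Then there is a normal subgroup `N ⊴ G` with `N ∩ Q = ⊥` and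
`[G : N] ≤ (|Q| · |Q|!)!`. -/
theorem bounding_ramification_lemma_4_1
    {G : Type*} [Group G] (p : ℕ) (hp : p.Prime)
    (K Q H : Subgroup G) [K.Normal] [Finite K] (hQK : Q ≤ K)
    (hSyl : ∃ S : Sylow p K, (S : Subgroup K) = Q.subgroupOf K)
    [hQnK : (Q.subgroupOf K).Normal]
    (hcyc : IsCyclic (↥K ⧸ Q.subgroupOf K))
    (hKH : K ⊓ H = ⊥) (hKHtop : K ⊔ H = ⊤) :
    ∃ N : Subgroup G, N.Normal ∧ N ⊓ Q = ⊥ ∧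
      N.index ≤ Nat.factorial (Nat.card Q * Nat.factorial (Nat.card Q)) := by
  have := Fact.mk hp
  obtain ⟨S, hS⟩ := hSyl
  have : Finite Q := Finite.of_injective _ (inclusion_injective hQK)
  have hQp : IsPGroup p Q := by
    have h := (hS ▸ S.isPGroup').map K.subtype
    rwa [subgroupOf_map_subtype, inf_of_le_left hQK] at h
  have : (Q.subgroupOf K).Characteristic := hS ▸ S.characteristic_of_normal (hS ▸ hQnK)
  have : Q.Normal := normal_of_characteristic_subgroupOf hQK
  have hpm : p.Coprime (Q.relIndex K) := by
    have h := S.not_dvd_index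
    rwa [hS, ← relIndex, ← hp.coprime_iff_not_dvd] at h
  set C := centralizer Q ⊓ K
  have : IsMulCommutative C := isMulCommutative_centralizer_inf
  set T := C.powTorsion (Q.relIndex K)
  have hTK : T.relIndex K ≤ Nat.card Q * (Nat.card Q)! := calc
    T.relIndex K = T.relIndex C * C.relIndex K :=
      (relIndex_mul_relIndex T C K powTorsion_le inf_le_right).symm
    _ ≤ Nat.card Q * (Nat.card Q)! := Nat.mul_le_mul
      (relIndex_powTorsion_le fun x hx => Q.pow_relIndex_mem hx.2)
      ((inf_relIndex_right _ K).trans_le (relIndex_centralizer_le_factorial Q K))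
  obtain ⟨N, hN, hNK, hNidx⟩ := exists_normal_inf_le_index_le_factorial hKH hKHtop
    (powTorsion_le.trans inf_le_right : T ≤ K) index_ne_zero_of_finite
  refine ⟨N, hN, eq_bot_iff.2 ?_, hNidx.trans (Nat.factorial_le hTK)⟩
  calc N ⊓ Q ≤ T ⊓ Q :=
        le_inf ((le_inf inf_le_left (inf_le_right.trans hQK)).trans hNK) inf_le_right
    _ = ⊥ := powTorsion_inf_eq_bot hQp hpm
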